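/- arXiv:2305.15300 — 2 statements merged into one kernel-verified Lean document; each statement's English description precedes it below -/
import Mathlib

section
/- Let V, W be finite-dimensional complex vector spaces, 𝓕 a filtration on V and 𝓖 a filtration on W. Define the tensor product non-Archimedean norm on V ⊗ W by χ_{𝓕⊗𝓖}(h) := inf over all finite decompositions h = Σ_a v_a ⊗ w_a (v_a ∈ V, w_a ∈ W) of max_a χ_𝓕(v_a)·χ_𝓖(w_a). If e₁,…,e_n is a basis of V diagonalizing χ_𝓕 and f₁,…,f_m is a basis of W diagonalizing χ_𝓖, then the basis {e_i ⊗ f_j} of V ⊗ W diagonalizes χ_{𝓕⊗𝓖}: for any scalars λ_{ij} ∈ ℂ, χ_{𝓕⊗𝓖}(Σ_{i,j} λ_{ij} e_i ⊗ f_j) = max{ χ_𝓕(e_i)·χ_𝓖(f_j) : λ_{ij} ≠ 0 } (and equals 0 if all λ_{ij} = 0). -/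
open scoped BigOperators
open Filter Classical

noncomputable section

variable {V : Type*} [AddCommGroup V] [Module ℂ V]

/-- A filtration on a complex vector space `V`: a left-continuous, decreasing family of
subspaces which equals `⊤` for `t` small enough and `⊥` for `t` large enough. -/
structure IsRealFiltration (F : ℝ → Submodule ℂ V) : Prop where
  antitone : ∀ ⦃s t : ℝ⦄, s ≤ t → F t ≤ F s
  left_cont : ∀ t : ℝ, ∃ ε > 0, ∀ δ : ℝ, 0 < δ → δ < ε → F (t - δ) = F t
  eventually_top : ∃ t₀ : ℝ, ∀ t ≤ t₀, F t = ⊤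
  eventually_bot : ∃ t₁ : ℝ, ∀ t, t₁ ≤ t → F t = ⊥

/-- The weight of a vector with respect to a filtration. -/
def filtWeight (F : ℝ → Submodule ℂ V) (s : V) : ℝ :=
  sSup {l : ℝ | s ∈ F l}

/-- The non-Archimedean norm `χ_𝓕` associated with a filtration. -/
def filtChi (F : ℝ → Submodule ℂ V) (s : V) : ℝ :=
  if s = 0 then 0 else Real.exp (-(filtWeight F s))

/-- The jumping numbers `e_𝓕(j)` of a filtration. -/
def jumpNum (F : ℝ → Submodule ℂ V) (j : ℕ) : ℝ :=
  sSup {t : ℝ | j ≤ Module.finrank ℂ (F t)}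

/-- The norm associated with a Hermitian inner product. -/
def hnorm (c : InnerProductSpace.Core ℂ V) : V → ℝ :=
  fun v => Real.sqrt ((c.inner v v).re)

/-- The `j`-th element of the logarithmic relative spectrum of two norms. -/
def relSpec (N₀ N₁ : V → ℝ) (j : ℕ) : ℝ :=
  sSup {r : ℝ | ∃ W : Submodule ℂ V, Module.finrank ℂ W = j ∧
    r = sInf {x : ℝ | ∃ w ∈ W, w ≠ 0 ∧ x = Real.log (N₁ w / N₀ w)}}

/-- The distance `d_p` between two norms, `p ∈ [1, ∞)`. -/
def dp (p : ℝ) (N₀ N₁ : V → ℝ) : ℝ :=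
  ((∑ j ∈ Finset.Icc 1 (Module.finrank ℂ V), |relSpec N₀ N₁ j| ^ p) /
    (Module.finrank ℂ V : ℝ)) ^ (1 / p)

/-- The distance `d_∞` between two norms. -/
def dInf (N₀ N₁ : V → ℝ) : ℝ :=
  sSup {r : ℝ | ∃ j ∈ Finset.Icc 1 (Module.finrank ℂ V), r = |relSpec N₀ N₁ j|}

/-- A family of vectors is orthonormal with respect to a Hermitian inner product. -/
def OrthonormalFor (c : InnerProductSpace.Core ℂ V) {ι : Type*} (s : ι → V) : Prop :=
  ∀ i j, c.inner (s i) (s j) = if i = j then 1 else 0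

/-- A family of vectors is orthogonal with respect to a Hermitian inner product. -/
def OrthogonalFor (c : InnerProductSpace.Core ℂ V) {ι : Type*} (s : ι → V) : Prop :=
  ∀ i j, i ≠ j → c.inner (s i) (s j) = 0

/-- `c : ℝ → InnerProductSpace.Core ℂ V` is the geodesic ray of Hermitian norms emanating
from `c 0` associated with the filtration `F` via the adapted orthonormal basis `s`:
`s` is orthonormal for `c 0`, `s j ∈ 𝓕^{e_𝓕(j)} V`, and for each `t ≥ 0` the rescaled basis
`(exp (t e_𝓕(i)) • s i)` is orthonormal for `c t`. -/
def IsGeodesicRayFor (F : ℝ → Submodule ℂ V) {n : ℕ} (s : Fin n → V)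
    (c : ℝ → InnerProductSpace.Core ℂ V) : Prop :=
  OrthonormalFor (c 0) s ∧
  (∀ i : Fin n, s i ∈ F (jumpNum F (i.1 + 1))) ∧
  ∀ t : ℝ, 0 ≤ t → ∀ i j : Fin n,
    (c t).inner (Real.exp (t * jumpNum F (i.1 + 1)) • s i)
      (Real.exp (t * jumpNum F (j.1 + 1)) • s j) = if i = j then 1 else 0

/-- A (complex) norm on a vector space. -/
structure IsComplexNorm (N : V → ℝ) : Prop where
  eq_zero_iff : ∀ x : V, N x = 0 ↔ x = 0
  smul : ∀ (a : ℂ) (x : V), N (a • x) = ‖a‖ * N x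
  add_le : ∀ x y : V, N (x + y) ≤ N x + N y


/-- The tensor-product non-Archimedean norm `χ_{𝓕⊗𝓖}` on `V ⊗ W`. -/
noncomputable def chiTensor {V W : Type*} [AddCommGroup V] [Module ℂ V]
    [AddCommGroup W] [Module ℂ W]
    (F : ℝ → Submodule ℂ V) (G : ℝ → Submodule ℂ W) (h : TensorProduct ℂ V W) : ℝ :=
  sInf {r : ℝ | ∃ (m : ℕ) (v : Fin m → V) (w : Fin m → W),
    h = ∑ a, v a ⊗ₜ[ℂ] w a ∧ r = ⨆ a, filtChi F (v a) * filtChi G (w a)}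

/-!
The `(i, j)`-coefficient of `∑ₐ vₐ ⊗ wₐ` in the basis `eᵢ ⊗ fⱼ` is `∑ₐ eᵢ*(vₐ) fⱼ*(wₐ)`. If it is
nonzero, some summand has `eᵢ*(vₐ) ≠ 0` and `fⱼ*(wₐ) ≠ 0`, and diagonality gives
`χ(eᵢ) ≤ χ(vₐ)` and `χ(fⱼ) ≤ χ(wₐ)`. So every decomposition costs at least
`max {χ(eᵢ) χ(fⱼ) : λᵢⱼ ≠ 0}`, which the expansion in the basis `eᵢ ⊗ fⱼ` attains.
-/

def DiagonalizesFiltChi (F : ℝ → Submodule ℂ V) {ι : Type*} [Fintype ι]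
    (e : Module.Basis ι ℂ V) : Prop :=
  ∀ lam : ι → ℂ, filtChi F (∑ i, lam i • e i) = ⨆ i, filtChi F (lam i • e i)

section Tensor

variable {W : Type*} [AddCommGroup W] [Module ℂ W] {F : ℝ → Submodule ℂ V}
  {G : ℝ → Submodule ℂ W}

lemma filtChi_nonneg (s : V) : 0 ≤ filtChi F s := by
  unfold filtChi
  split_ifs
  exacts [le_rfl, (Real.exp_pos _).le]

@[simp]
lemma filtChi_zero : filtChi F (0 : V) = 0 := if_pos rfl

lemma filtChi_smul {c : ℂ} (hc : c ≠ 0) (v : V) : filtChi F (c • v) = filtChi F v := by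
  simp only [filtChi, filtWeight, smul_eq_zero, hc, false_or, Submodule.smul_mem_iff _ hc]

lemma DiagonalizesFiltChi.filtChi_le {ι : Type*} [Fintype ι] {e : Module.Basis ι ℂ V}
    (he : DiagonalizesFiltChi F e) {v : V} {i : ι} (hv : e.repr v i ≠ 0) :
    filtChi F (e i) ≤ filtChi F v := by
  have hsum := he (e.repr v)
  rw [e.sum_repr] at hsum
  calc filtChi F (e i) = filtChi F (e.repr v i • e i) := (filtChi_smul hv _).symm
    _ ≤ ⨆ i, filtChi F (e.repr v i • e i) :=
      le_ciSup (f := fun i ↦ filtChi F (e.repr v i • e i)) (Finite.bddAbove_range _) i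
    _ = filtChi F v := hsum.symm

lemma chiTensor_eq_of_isLeast {h : TensorProduct ℂ V W} {α : Type*} [Fintype α]
    {v : α → V} {w : α → W} (hvw : h = ∑ a, v a ⊗ₜ[ℂ] w a)
    (hmin : ∀ (M : ℕ) (v' : Fin M → V) (w' : Fin M → W), h = ∑ a, v' a ⊗ₜ[ℂ] w' a →
      ⨆ a, filtChi F (v a) * filtChi G (w a) ≤ ⨆ a, filtChi F (v' a) * filtChi G (w' a)) :
    chiTensor F G h = ⨆ a, filtChi F (v a) * filtChi G (w a) := by
  refine IsLeast.csInf_eq ⟨?_, fun r ⟨M, v', w', hvw', hr⟩ ↦ hr ▸ hmin M v' w' hvw'⟩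
  let σ := (Fintype.equivFin α).symm
  refine ⟨Fintype.card α, v ∘ σ, w ∘ σ, ?_, ?_⟩
  · rw [hvw]
    exact (σ.sum_comp fun a ↦ v a ⊗ₜ[ℂ] w a).symm
  · exact (σ.iSup_comp (g := fun a ↦ filtChi F (v a) * filtChi G (w a))).symm

lemma filtChi_mul_le_iSup_of_repr_ne_zero {ι κ α : Type*} [Fintype ι] [Fintype κ] [Fintype α]
    {e : Module.Basis ι ℂ V} {f : Module.Basis κ ℂ W}
    (he : DiagonalizesFiltChi F e) (hf : DiagonalizesFiltChi G f)
    {v : α → V} {w : α → W} {i : ι} {j : κ}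
    (hij : (e.tensorProduct f).repr (∑ a, v a ⊗ₜ[ℂ] w a) (i, j) ≠ 0) :
    filtChi F (e i) * filtChi G (f j) ≤ ⨆ a, filtChi F (v a) * filtChi G (w a) := by
  simp only [map_sum, Finsupp.finsetSum_apply, Module.Basis.tensorProduct_repr_tmul_apply] at hij
  obtain ⟨a, -, ha⟩ := Finset.exists_ne_zero_of_sum_ne_zero hij
  obtain ⟨hw, hv⟩ := mul_ne_zero_iff.mp ha
  calc filtChi F (e i) * filtChi G (f j) ≤ filtChi F (v a) * filtChi G (w a) :=
        mul_le_mul (he.filtChi_le hv) (hf.filtChi_le hw) (filtChi_nonneg _) (filtChi_nonneg _)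
    _ ≤ ⨆ a, filtChi F (v a) * filtChi G (w a) :=
      le_ciSup (f := fun a ↦ filtChi F (v a) * filtChi G (w a)) (Finite.bddAbove_range _) a

theorem DiagonalizesFiltChi.chiTensor_sum_smul_tmul {ι κ : Type*} [Fintype ι] [Fintype κ]
    {e : Module.Basis ι ℂ V} {f : Module.Basis κ ℂ W}
    (he : DiagonalizesFiltChi F e) (hf : DiagonalizesFiltChi G f) (lam : ι × κ → ℂ) :
    chiTensor F G (∑ ij, lam ij • (e ij.1 ⊗ₜ[ℂ] f ij.2)) =
      ⨆ ij : ι × κ, filtChi F (lam ij • e ij.1) * filtChi G (f ij.2) := by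
  refine chiTensor_eq_of_isLeast (by simp only [TensorProduct.smul_tmul']) ?_
  rintro M v w hvw
  have hsup : 0 ≤ ⨆ a, filtChi F (v a) * filtChi G (w a) :=
    Real.iSup_nonneg fun a ↦ mul_nonneg (filtChi_nonneg _) (filtChi_nonneg _)
  refine Real.iSup_le (fun ij ↦ ?_) hsup
  by_cases hlam : lam ij = 0
  · simpa [hlam] using hsup
  rw [filtChi_smul hlam]
  refine filtChi_mul_le_iSup_of_repr_ne_zero he hf ?_
  have hrepr : (e.tensorProduct f).repr (∑ ij, lam ij • (e ij.1 ⊗ₜ[ℂ] f ij.2)) ij = lam ij := by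
    simpa only [Module.Basis.tensorProduct_apply'] using
      congrFun ((e.tensorProduct f).repr_sum_self lam) ij
  rwa [← hvw, hrepr]

end Tensor

theorem chiTensor_diagonalizing_general
    {V W : Type*} [AddCommGroup V] [Module ℂ V]
    [AddCommGroup W] [Module ℂ W]
    {n m : ℕ} (F : ℝ → Submodule ℂ V) (G : ℝ → Submodule ℂ W)
    (e : Module.Basis (Fin n) ℂ V) (f : Module.Basis (Fin m) ℂ W)
    (he : ∀ lam : Fin n → ℂ, filtChi F (∑ i, lam i • e i) = ⨆ i, filtChi F (lam i • e i))
    (hf : ∀ lam : Fin m → ℂ, filtChi G (∑ j, lam j • f j) = ⨆ j, filtChi G (lam j • f j)) :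
    ∀ lam : Fin n × Fin m → ℂ,
      ((∀ ij, lam ij = 0) →
        chiTensor F G (∑ ij : Fin n × Fin m, lam ij • (e ij.1 ⊗ₜ[ℂ] f ij.2)) = 0) ∧
      ((∃ ij, lam ij ≠ 0) →
        chiTensor F G (∑ ij : Fin n × Fin m, lam ij • (e ij.1 ⊗ₜ[ℂ] f ij.2)) =
          sSup {r : ℝ | ∃ ij : Fin n × Fin m, lam ij ≠ 0 ∧
            r = filtChi F (e ij.1) * filtChi G (f ij.2)}) := by
  intro lam
  rw [DiagonalizesFiltChi.chiTensor_sum_smul_tmul he hf lam]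
  refine ⟨fun h0 ↦ by simp [h0], fun ⟨ij₀, hij₀⟩ ↦ ?_⟩
  set T := {r : ℝ | ∃ ij : Fin n × Fin m, lam ij ≠ 0 ∧
    r = filtChi F (e ij.1) * filtChi G (f ij.2)}
  have hT : BddAbove T :=
    (Finite.bddAbove_range fun ij : Fin n × Fin m ↦ filtChi F (e ij.1) * filtChi G (f ij.2)).mono
      fun _ ⟨ij, _, hr⟩ ↦ Set.mem_range.mpr ⟨ij, hr.symm⟩
  have hT₀ : filtChi F (e ij₀.1) * filtChi G (f ij₀.2) ∈ T := ⟨ij₀, hij₀, rfl⟩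
  have : Nonempty (Fin n × Fin m) := ⟨ij₀⟩
  refine le_antisymm (ciSup_le fun ij ↦ ?_) (csSup_le ⟨_, hT₀⟩ ?_)
  · by_cases hlam : lam ij = 0
    · simpa [hlam] using le_csSup_of_le hT hT₀ (mul_nonneg (filtChi_nonneg _) (filtChi_nonneg _))
    · rw [filtChi_smul hlam]
      exact le_csSup hT ⟨ij, hlam, rfl⟩
  · rintro _ ⟨ij, hlam, rfl⟩
    rw [← filtChi_smul (F := F) hlam]
    exact le_ciSup (f := fun ij ↦ filtChi F (lam ij • e ij.1) * filtChi G (f ij.2))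
      (Finite.bddAbove_range _) ij

/-- if bases `e` of `V` and `f` of `W` diagonalize `χ_𝓕` and `χ_𝓖`
respectively, then the basis `{eᵢ ⊗ fⱼ}` diagonalizes `χ_{𝓕⊗𝓖}`. -/
theorem chiTensor_diagonalizing
    {V W : Type*} [AddCommGroup V] [Module ℂ V] [FiniteDimensional ℂ V]
    [AddCommGroup W] [Module ℂ W] [FiniteDimensional ℂ W]
    {n m : ℕ} (F : ℝ → Submodule ℂ V) (G : ℝ → Submodule ℂ W)
    (hF : IsRealFiltration F) (hG : IsRealFiltration G)
    (e : Module.Basis (Fin n) ℂ V) (f : Module.Basis (Fin m) ℂ W)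
    (he : ∀ lam : Fin n → ℂ, filtChi F (∑ i, lam i • e i) = ⨆ i, filtChi F (lam i • e i))
    (hf : ∀ lam : Fin m → ℂ, filtChi G (∑ j, lam j • f j) = ⨆ j, filtChi G (lam j • f j)) :
    ∀ lam : Fin n × Fin m → ℂ,
      ((∀ ij, lam ij = 0) →
        chiTensor F G (∑ ij : Fin n × Fin m, lam ij • (e ij.1 ⊗ₜ[ℂ] f ij.2)) = 0) ∧
      ((∃ ij, lam ij ≠ 0) →
        chiTensor F G (∑ ij : Fin n × Fin m, lam ij • (e ij.1 ⊗ₜ[ℂ] f ij.2)) =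
          sSup {r : ℝ | ∃ ij : Fin n × Fin m, lam ij ≠ 0 ∧
            r = filtChi F (e ij.1) * filtChi G (f ij.2)}) :=
  chiTensor_diagonalizing_general F G e f he hf

end
end

section
/- Let V be an n-dimensional complex vector space (n ≥ 1), 𝓕 a filtration on V with jumping numbers e_𝓕(1),…,e_𝓕(n), H₀ a Hermitian norm on V, and H_t^𝓕 (t ≥ 0) the geodesic ray of Hermitian norms emanating from H₀ associated with 𝓕 via an adapted orthonormal basis. Then for all t, s ∈ [0,∞) and every p ∈ [1,∞): d_p(H_t^𝓕, H_s^𝓕) = |t − s| · ((1/n)·Σ_{i=1}^n |e_𝓕(i)|^p)^{1/p}, and d_∞(H_t^𝓕, H_s^𝓕) = |t − s| · max_i |e_𝓕(i)|. -/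
open scoped BigOperators
open Filter Classical

noncomputable section

variable {V : Type*} [AddCommGroup V] [Module ℂ V]

/-- A filtration on a complex vector space `V`: a left-continuous, decreasing family of
subspaces which equals `⊤` for `t` small enough and `⊥` for `t` large enough. -/
structure IsFiltration' (F : ℝ → Submodule ℂ V) : Prop where
  antitone : ∀ ⦃s t : ℝ⦄, s ≤ t → F t ≤ F s
  left_cont : ∀ t : ℝ, ∃ ε > 0, ∀ δ : ℝ, 0 < δ → δ < ε → F (t - δ) = F t
  eventually_top : ∃ t₀ : ℝ, ∀ t ≤ t₀, F t = ⊤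
  eventually_bot : ∃ t₁ : ℝ, ∀ t, t₁ ≤ t → F t = ⊥

/-!
Every norm `H_t` of the ray is diagonal in the basis `b`, with `‖b i‖_t = exp (-t e_𝓕(i))`.
For two norms diagonal in a common basis, with `‖b i‖₁ / ‖b i‖₀ = exp λ_i`, the relative
spectrum is the list of the `λ_i` in decreasing order: the span of the `j` basis vectors with the
largest `λ` witnesses `μ_j ≥ λ_(j)`, and every `j`-dimensional subspace meets the span of the
remaining `n - j + 1` ones, which gives `μ_j ≤ λ_(j)`. For `H_t, H_s` one has
`λ_i = (t - s) e_𝓕(i)`, and `d_p`, `d_∞` are symmetric functions of the spectrum.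
-/

open Module

namespace InnerProductSpace.Core

def sesqForm (c : InnerProductSpace.Core ℂ V) : V →ₗ⋆[ℂ] V →ₗ[ℂ] ℂ :=
  LinearMap.mk₂'ₛₗ _ _ c.inner c.add_left (fun a x y => c.smul_left x y a)
    (inner_add_right (c := c.toCore)) (fun _ x y => inner_smul_right (c := c.toCore) x y)

theorem re_inner_self_eq_sum_of_orthogonal {ι : Type*} [Fintype ι] [DecidableEq ι]
    (c : InnerProductSpace.Core ℂ V) (b : Basis ι ℂ V) (g : ι → ℝ)
    (hg : ∀ i j, c.inner (b i) (b j) = if i = j then (g i : ℂ) else 0) (v : V) :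
    (c.inner v v).re = ∑ i, ‖b.repr v i‖ ^ 2 * g i := by
  have hexpand : c.inner v v = ∑ i, starRingEnd ℂ (b.repr v i) * (b.repr v i * g i) := by
    refine (c.sesqForm.sum_repr_mul_repr_mulₛₗ b b v v).symm.trans ?_
    simp [sesqForm, Finsupp.sum_fintype, hg]
  rw [hexpand, Complex.re_sum]
  refine Finset.sum_congr rfl fun i _ => ?_
  rw [← mul_assoc, RCLike.conj_mul]
  simp [← Complex.ofReal_pow]

end InnerProductSpace.Core

section DiagonalNorm

variable {ι : Type*} [Fintype ι]

/-- The Hermitian norm in which the `b i` are orthogonal with `‖b i‖ = exp (w i)`. -/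
def diagNorm (b : Basis ι ℂ V) (w : ι → ℝ) (v : V) : ℝ :=
  √(∑ i, ‖b.repr v i‖ ^ 2 * Real.exp (2 * w i))

theorem hnorm_eq_diagNorm [DecidableEq ι] (c : InnerProductSpace.Core ℂ V) (b : Basis ι ℂ V)
    (w : ι → ℝ)
    (hc : ∀ i j, c.inner (b i) (b j) = if i = j then (Real.exp (2 * w i) : ℂ) else 0) :
    hnorm c = diagNorm b w :=
  funext fun v => congrArg Real.sqrt (c.re_inner_self_eq_sum_of_orthogonal b _ hc v)

theorem diagNorm_pos (b : Basis ι ℂ V) (w : ι → ℝ) {v : V} (hv : v ≠ 0) :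
    0 < diagNorm b w v := by
  obtain ⟨i, hi⟩ : ∃ i, b.repr v i ≠ 0 := by
    by_contra! h
    exact hv (b.ext_elem fun i => by simp [h i])
  refine Real.sqrt_pos.2 (Finset.sum_pos' (fun j _ => by positivity) ⟨i, Finset.mem_univ i, ?_⟩)
  have : 0 < ‖b.repr v i‖ := norm_pos_iff.2 hi
  positivity

theorem diagNorm_add_const (b : Basis ι ℂ V) (w : ι → ℝ) (m : ℝ) (v : V) :
    diagNorm b (fun i => w i + m) v = Real.exp m * diagNorm b w v := by
  have hsum : ∑ i, ‖b.repr v i‖ ^ 2 * Real.exp (2 * (w i + m))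
      = Real.exp m ^ 2 * ∑ i, ‖b.repr v i‖ ^ 2 * Real.exp (2 * w i) := by
    rw [Finset.mul_sum]
    refine Finset.sum_congr rfl fun i _ => ?_
    rw [← Real.exp_nat_mul, mul_add, Real.exp_add]
    push_cast
    ring
  rw [diagNorm, diagNorm, hsum, Real.sqrt_mul (by positivity), Real.sqrt_sq (Real.exp_nonneg m)]

theorem diagNorm_le_diagNorm (b : Basis ι ℂ V) {w w' : ι → ℝ} {v : V}
    (h : ∀ i, b.repr v i ≠ 0 → w i ≤ w' i) : diagNorm b w v ≤ diagNorm b w' v := by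
  refine Real.sqrt_le_sqrt (Finset.sum_le_sum fun i _ => ?_)
  by_cases hi : b.repr v i = 0
  · simp [hi]
  · gcongr
    exact h i hi

theorem le_log_diagNorm_div (b : Basis ι ℂ V) {w w' : ι → ℝ} {v : V} (hv : v ≠ 0) {m : ℝ}
    (h : ∀ i, b.repr v i ≠ 0 → m ≤ w' i - w i) :
    m ≤ Real.log (diagNorm b w' v / diagNorm b w v) := by
  have h₀ := diagNorm_pos b w hv
  rw [Real.le_log_iff_exp_le (div_pos (diagNorm_pos b w' hv) h₀), le_div_iff₀ h₀,
    ← diagNorm_add_const]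
  exact diagNorm_le_diagNorm b fun i hi => by linarith [h i hi]

theorem log_diagNorm_div_le (b : Basis ι ℂ V) {w w' : ι → ℝ} {v : V} (hv : v ≠ 0) {M : ℝ}
    (h : ∀ i, b.repr v i ≠ 0 → w' i - w i ≤ M) :
    Real.log (diagNorm b w' v / diagNorm b w v) ≤ M := by
  have h₀ := diagNorm_pos b w hv
  rw [Real.log_le_iff_le_exp (div_pos (diagNorm_pos b w' hv) h₀), div_le_iff₀ h₀,
    ← diagNorm_add_const]
  exact diagNorm_le_diagNorm b fun i hi => by linarith [h i hi]

theorem diagNorm_reindex {ι' : Type*} [Fintype ι'] (b : Basis ι ℂ V) (e : ι ≃ ι')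
    (w : ι' → ℝ) :
    diagNorm (b.reindex e) w = diagNorm b (w ∘ e) := by
  funext v
  simp only [diagNorm, Basis.repr_reindex_apply, Function.comp_apply]
  congr 1
  exact Fintype.sum_equiv e.symm _ _ fun x => by simp

end DiagonalNorm

theorem relSpec_eq_of_minmax {N₀ N₁ : V → ℝ} {j : ℕ} {a : ℝ}
    (hbdd : ∃ m, ∀ v, v ≠ 0 → m ≤ Real.log (N₁ v / N₀ v))
    (hlarge : ∃ W : Submodule ℂ V, finrank ℂ W = j ∧
      ∀ w ∈ W, w ≠ 0 → a ≤ Real.log (N₁ w / N₀ w))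
    (hsmall : ∀ W : Submodule ℂ V, finrank ℂ W = j →
      ∃ w ∈ W, w ≠ 0 ∧ Real.log (N₁ w / N₀ w) ≤ a) :
    relSpec N₀ N₁ j = a := by
  obtain ⟨m, hm⟩ := hbdd
  have hinf_le : ∀ W : Submodule ℂ V, finrank ℂ W = j →
      sInf {x : ℝ | ∃ w ∈ W, w ≠ 0 ∧ x = Real.log (N₁ w / N₀ w)} ≤ a := by
    intro W hW
    obtain ⟨w, hwW, hw0, hwa⟩ := hsmall W hW
    exact csInf_le_of_le ⟨m, by rintro x ⟨v, -, hv, rfl⟩; exact hm v hv⟩ ⟨w, hwW, hw0, rfl⟩ hwa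
  have hupper : ∀ r ∈ {r : ℝ | ∃ W : Submodule ℂ V, finrank ℂ W = j ∧
      r = sInf {x : ℝ | ∃ w ∈ W, w ≠ 0 ∧ x = Real.log (N₁ w / N₀ w)}}, r ≤ a := by
    rintro r ⟨W, hW, rfl⟩
    exact hinf_le W hW
  obtain ⟨W, hW, hWa⟩ := hlarge
  obtain ⟨w, hwW, hw0, -⟩ := hsmall W hW
  have hle_inf : a ≤ sInf {x : ℝ | ∃ w ∈ W, w ≠ 0 ∧ x = Real.log (N₁ w / N₀ w)} :=
    le_csInf ⟨_, w, hwW, hw0, rfl⟩ (by rintro x ⟨v, hvW, hv, rfl⟩; exact hWa v hvW hv)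
  exact le_antisymm (csSup_le ⟨_, W, hW, rfl⟩ hupper)
    (hle_inf.trans (le_csSup ⟨a, hupper⟩ ⟨W, hW, rfl⟩))

theorem finrank_span_basis_image {K E ι : Type*} [DivisionRing K] [AddCommGroup E] [Module K E]
    (b : Basis ι K E) (s : Finset ι) : finrank K (Submodule.span K (b '' s)) = s.card := by
  rw [Set.image_eq_range]
  exact (finrank_span_eq_card (b.linearIndependent.comp _ Subtype.val_injective)).trans
    (Fintype.card_coe s)

theorem exists_ne_zero_mem_inf_of_lt_finrank_add {K E : Type*} [DivisionRing K] [AddCommGroup E]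
    [Module K E] [FiniteDimensional K E] {W W' : Submodule K E}
    (h : finrank K E < finrank K W + finrank K W') : ∃ w ∈ W, w ∈ W' ∧ w ≠ 0 := by
  by_contra! hdisj
  exact h.not_ge (Submodule.finrank_add_finrank_le_of_disjoint (Submodule.disjoint_def.2 hdisj))

theorem relSpec_diagNorm_of_antitone {n : ℕ} (b : Basis (Fin n) ℂ V) {w w' : Fin n → ℝ}
    (hanti : Antitone (w' - w)) (k : Fin n) :
    relSpec (diagNorm b w) (diagNorm b w') (k + 1) = w' k - w k := by
  have : FiniteDimensional ℂ V := b.finiteDimensional_of_finite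
  have hdim : finrank ℂ V = n := (finrank_eq_card_basis b).trans (Fintype.card_fin n)
  have hsupp : ∀ {s : Set (Fin n)} {v : V}, v ∈ Submodule.span ℂ (b '' s) →
      ∀ i, b.repr v i ≠ 0 → i ∈ s :=
    fun hv _ hi => b.mem_span_image.1 hv (Finsupp.mem_support_iff.2 hi)
  refine relSpec_eq_of_minmax ?_ ⟨Submodule.span ℂ (b '' Finset.Iic k), ?_, ?_⟩ fun W hW => ?_
  · exact ⟨⨅ i, (w' - w) i, fun v hv => le_log_diagNorm_div b hv
      fun i _ => ciInf_le (Set.finite_range _).bddBelow i⟩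
  · exact (finrank_span_basis_image b _).trans (Fin.card_Iic k)
  · exact fun v hv hv0 => le_log_diagNorm_div b hv0
      fun i hi => hanti (Finset.mem_Iic.1 (hsupp hv i hi))
  · obtain ⟨v, hvW, hv, hv0⟩ := exists_ne_zero_mem_inf_of_lt_finrank_add
      (W' := Submodule.span ℂ (b '' Finset.Ici k))
      (by rw [hW, finrank_span_basis_image, Fin.card_Ici, hdim]; omega)
    exact ⟨v, hvW, hv0, log_diagNorm_div_le b hv0
      fun i hi => hanti (Finset.mem_Ici.1 (hsupp hv i hi))⟩

theorem exists_perm_relSpec_diagNorm {n : ℕ} (b : Basis (Fin n) ℂ V) (w w' : Fin n → ℝ) :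
    ∃ σ : Equiv.Perm (Fin n), ∀ k : Fin n,
      relSpec (diagNorm b w) (diagNorm b w') (k + 1) = w' (σ k) - w (σ k) := by
  set σ := Tuple.sort fun i => w i - w' i
  refine ⟨σ, fun k => ?_⟩
  have hanti : Antitone (w' ∘ σ - w ∘ σ) := fun i j hij => by
    have h := Tuple.monotone_sort (fun i => w i - w' i) hij
    simp only [Function.comp_apply, Pi.sub_apply] at h ⊢
    linarith
  have hreindex : ∀ u : Fin n → ℝ, diagNorm b u = diagNorm (b.reindex σ.symm) (u ∘ σ) := by
    intro u
    rw [diagNorm_reindex]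
    simp [Function.comp_def]
  rw [hreindex w, hreindex w', relSpec_diagNorm_of_antitone _ hanti]
  rfl

theorem Finset.Icc_one_eq_image_fin (n : ℕ) :
    Finset.Icc 1 n = Finset.univ.image fun k : Fin n => k.1 + 1 := by
  ext j
  simp only [Finset.mem_Icc, Finset.mem_image, Finset.mem_univ, true_and, Fin.exists_iff]
  exact ⟨fun h => ⟨j - 1, by omega, by omega⟩, fun ⟨k, hk, hkj⟩ => by omega⟩

theorem dp_eq_of_relSpec_eq {n : ℕ} (hdim : finrank ℂ V = n)
    {N₀ N₁ : V → ℝ} (μ : Fin n → ℝ) (σ : Equiv.Perm (Fin n))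
    (hμ : ∀ k : Fin n, relSpec N₀ N₁ (k + 1) = μ (σ k)) (p : ℝ) :
    dp p N₀ N₁ = ((∑ i, |μ i| ^ p) / n) ^ (1 / p) := by
  rw [dp, hdim, Finset.Icc_one_eq_image_fin,
    Finset.sum_image fun k _ l _ h => Fin.ext (Nat.succ_injective h)]
  simp only [hμ]
  rw [Equiv.sum_comp σ fun i => |μ i| ^ p]

theorem dInf_eq_of_relSpec_eq {n : ℕ} (hdim : finrank ℂ V = n)
    {N₀ N₁ : V → ℝ} (μ : Fin n → ℝ) (σ : Equiv.Perm (Fin n))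
    (hμ : ∀ k : Fin n, relSpec N₀ N₁ (k + 1) = μ (σ k)) :
    dInf N₀ N₁ = ⨆ i, |μ i| := by
  rw [dInf, hdim, ← σ.iSup_comp, iSup]
  congr 1
  ext r
  simp [Finset.Icc_one_eq_image_fin, hμ, eq_comm]

theorem IsGeodesicRayFor.inner_eq {F : ℝ → Submodule ℂ V} {n : ℕ} {s : Fin n → V}
    {c : ℝ → InnerProductSpace.Core ℂ V} (hray : IsGeodesicRayFor F s c) {t : ℝ} (ht : 0 ≤ t)
    (i j : Fin n) : (c t).inner (s i) (s j) =
      if i = j then (Real.exp (2 * -(t * jumpNum F (i.1 + 1))) : ℂ) else 0 := by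
  have h := hray.2.2 t ht i j
  rw [← Complex.coe_smul, ← Complex.coe_smul, (c t).smul_left,
    InnerProductSpace.Core.inner_smul_right (c := (c t).toCore), Complex.conj_ofReal] at h
  split_ifs at h ⊢ with hij
  · subst hij
    set a := t * jumpNum F (i.1 + 1)
    have h' : ((Real.exp a * Real.exp a : ℝ) : ℂ) * (c t).inner (s i) (s i) = 1 := by
      rw [Complex.ofReal_mul, mul_assoc, h]
    rw [eq_inv_of_mul_eq_one_right h', ← Complex.ofReal_inv, ← Real.exp_add, ← Real.exp_neg]
    ring_nf
  · simpa [Real.exp_ne_zero] using h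

theorem IsGeodesicRayFor.hnorm_eq {F : ℝ → Submodule ℂ V} {n : ℕ}
    {b : Basis (Fin n) ℂ V} {c : ℝ → InnerProductSpace.Core ℂ V}
    (hray : IsGeodesicRayFor F b c) {t : ℝ} (ht : 0 ≤ t) :
    hnorm (c t) = diagNorm b fun i => -(t * jumpNum F (i.1 + 1)) :=
  hnorm_eq_diagNorm _ _ _ (hray.inner_eq ht)

theorem geodesic_ray_distance_formula_general
    {V : Type*} [AddCommGroup V] [Module ℂ V]
    {n : ℕ}
    (F : ℝ → Submodule ℂ V)
    (b : Module.Basis (Fin n) ℂ V) (c : ℝ → InnerProductSpace.Core ℂ V)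
    (hray : IsGeodesicRayFor F (⇑b) c) :
    ∀ t s : ℝ, 0 ≤ t → 0 ≤ s →
      (∀ p : ℝ, 1 ≤ p →
        dp p (hnorm (c t)) (hnorm (c s)) =
          |t - s| * ((∑ i : Fin n, |jumpNum F (i.1 + 1)| ^ p) / n) ^ (1 / p)) ∧
      dInf (hnorm (c t)) (hnorm (c s)) = |t - s| * ⨆ i : Fin n, |jumpNum F (i.1 + 1)| := by
  intro t s ht hs
  set e : Fin n → ℝ := fun i => jumpNum F (i.1 + 1)
  have hdim : finrank ℂ V = n := (finrank_eq_card_basis b).trans (Fintype.card_fin n)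
  obtain ⟨σ, hσ⟩ := exists_perm_relSpec_diagNorm b (fun i => -(t * e i)) (fun i => -(s * e i))
  have hμ : ∀ k : Fin n, relSpec (hnorm (c t)) (hnorm (c s)) (k + 1) = (t - s) * e (σ k) := by
    intro k
    rw [hray.hnorm_eq ht, hray.hnorm_eq hs, hσ]
    ring
  have habs : ∀ i, |(t - s) * e i| = |t - s| * |e i| := fun i => abs_mul _ _
  refine ⟨fun p hp => ?_, ?_⟩
  · rw [dp_eq_of_relSpec_eq hdim (fun i => (t - s) * e i) σ hμ]
    simp only [habs, Real.mul_rpow (abs_nonneg _) (abs_nonneg _)]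
    rw [← Finset.mul_sum, mul_div_assoc, Real.mul_rpow (by positivity) (by positivity),
      ← Real.rpow_mul (abs_nonneg _), mul_one_div_cancel (by positivity), Real.rpow_one]
  · rw [dInf_eq_of_relSpec_eq hdim (fun i => (t - s) * e i) σ hμ]
    simp only [habs]
    exact (Real.mul_iSup_of_nonneg (abs_nonneg _) _).symm

/-- along a geodesic ray of Hermitian norms associated with a filtration `𝓕`,
for all `t, s ≥ 0`,
`d_p(H_t^𝓕, H_s^𝓕) = |t−s| · ((1/n)·Σᵢ |e_𝓕(i)|^p)^{1/p}` for `p ∈ [1,∞)` and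
`d_∞(H_t^𝓕, H_s^𝓕) = |t−s| · maxᵢ |e_𝓕(i)|`. -/
theorem geodesic_ray_distance_formula
    {V : Type*} [AddCommGroup V] [Module ℂ V] [FiniteDimensional ℂ V]
    {n : ℕ} (hn : 1 ≤ n) (hdim : Module.finrank ℂ V = n)
    (F : ℝ → Submodule ℂ V) (hF : IsFiltration' F)
    (b : Module.Basis (Fin n) ℂ V) (c : ℝ → InnerProductSpace.Core ℂ V)
    (hray : IsGeodesicRayFor F (⇑b) c) :
    ∀ t s : ℝ, 0 ≤ t → 0 ≤ s →
      (∀ p : ℝ, 1 ≤ p →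
        dp p (hnorm (c t)) (hnorm (c s)) =
          |t - s| * ((∑ i : Fin n, |jumpNum F (i.1 + 1)| ^ p) / n) ^ (1 / p)) ∧
      dInf (hnorm (c t)) (hnorm (c s)) = |t - s| * ⨆ i : Fin n, |jumpNum F (i.1 + 1)| :=
  geodesic_ray_distance_formula_general F b c hray

end
end
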